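/- arXiv:2405.11419 — 7 statements merged into one kernel-verified Lean document; each statement's English description precedes it below -/
import Mathlib

section
/- In the LDPJoinSketch mechanism, fix a target value d and line j. For an input value d^(i), define the debiased contribution to cell (j, h_j(d)) as M(j,h_j(d))^(i) = c_ε · k · B · ξ_j(d^(i)) · H_m[h_j(d^(i)), L] · H_m[L, h_j(d)] · 1{J = j}, where J ~ Uniform{0,...,k-1}, L ~ Uniform{0,...,m-1}, B ∈ {-1,+1} with Pr[B=1] = e^ε/(1+e^ε), all independent, and c_ε = (e^ε+1)/(e^ε-1). If d^(i) = d then E[M(j,h_j(d))^(i)] = ξ_j(d). -/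
/-- The Sylvester Hadamard matrix of order `2^t`, defined recursively by
`H_1 = [1]` and `H_{2n} = [[H_n, H_n], [H_n, -H_n]]`. -/
noncomputable def Had : (t : ℕ) → Matrix (Fin (2^t)) (Fin (2^t)) ℝ
  | 0 => fun _ _ => 1
  | (t+1) => fun i j =>
      (if 2^t ≤ (i : ℕ) ∧ 2^t ≤ (j : ℕ) then (-1 : ℝ) else 1) *
        Had t ⟨(i : ℕ) % 2^t, Nat.mod_lt _ (by positivity)⟩
              ⟨(j : ℕ) % 2^t, Nat.mod_lt _ (by positivity)⟩

/-- The probability mass of one sample `(J, L, B)` of the client's randomness: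
`J` uniform on `Fin k`, `L` uniform on `Fin (2^t)`, and the sign bit `B` equal to `+1`
(`true`) with probability `e^ε/(1+e^ε)` and `-1` (`false`) with probability `1/(1+e^ε)`. -/
noncomputable def sketchPMF (ε : ℝ) (k t : ℕ) (ω : Fin k × Fin (2^t) × Bool) : ℝ :=
  ((1 : ℝ)/k) * ((1 : ℝ)/2^t) *
    (if ω.2.2 then Real.exp ε / (1 + Real.exp ε) else 1 / (1 + Real.exp ε))

/-- The debiased contribution `c_ε · k · B · s · H_m[a, L] · H_m[L, x] · 1{J = j}`
of an entry encoded at hash cell `a` with sign `s` to the sketch cell `(j, x)`. -/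
noncomputable def contrib (ε : ℝ) (k t : ℕ) (a x : Fin (2^t)) (s : ℝ) (j : Fin k)
    (ω : Fin k × Fin (2^t) × Bool) : ℝ :=
  ((Real.exp ε + 1)/(Real.exp ε - 1)) * k * (if ω.2.2 then (1 : ℝ) else -1) * s *
    Had t a ω.2.1 * Had t ω.2.1 x * (if ω.1 = j then 1 else 0)

/-!
Only `J = j` contributes, and there the factor `k` cancels `Pr[J = j] = 1/k`. For every `L`
the two Hadamard entries multiply to `H[a, L]² = 1`, so averaging over `L` is trivial. Finally
`c_ε` is exactly the inverse of `E[B] = (e^ε - 1)/(e^ε + 1)`.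
-/

theorem Had_symm (t : ℕ) (i j : Fin (2^t)) : Had t i j = Had t j i := by
  induction t with
  | zero => rfl
  | succ t ih => simp only [Had, and_comm, ih]

theorem Had_mul_self (t : ℕ) (i j : Fin (2^t)) : Had t i j * Had t i j = 1 := by
  induction t with
  | zero => simp [Had]
  | succ t ih =>
    simp only [Had]
    split_ifs <;> linear_combination ih _ _

theorem Had_mul_Had_swap (t : ℕ) (i j : Fin (2^t)) : Had t i j * Had t j i = 1 := by
  rw [Had_symm t j i, Had_mul_self]

theorem debiasConst_mul_mean_sign {ε : ℝ} (hε : ε ≠ 0) :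
    (Real.exp ε + 1) / (Real.exp ε - 1) *
      (Real.exp ε / (1 + Real.exp ε) - 1 / (1 + Real.exp ε)) = 1 := by
  have : Real.exp ε - 1 ≠ 0 := sub_ne_zero.mpr (by simpa using hε)
  field_simp
  ring

theorem stmt_7_general (ε : ℝ) (hε : 0 < ε) (t k : ℕ) (hk : 0 < k) (D : Type)
    (h : Fin k → D → Fin (2^t)) (ξ : Fin k → D → ℝ)
    (d : D) (j : Fin k) :
    ∑ ω : Fin k × Fin (2^t) × Bool,
        sketchPMF ε k t ω * contrib ε k t (h j d) (h j d) (ξ j d) j ω = ξ j d := by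
  rw [Fintype.sum_prod_type, Finset.sum_eq_single j (fun J _ hJ => by simp [contrib, hJ])
    (by simp), Fintype.sum_prod_type]
  simp only [Fintype.sum_bool, sketchPMF, contrib, if_true, Bool.false_eq_true, if_false]
  simp only [mul_assoc, Had_mul_Had_swap]
  rw [Finset.sum_const, Finset.card_univ, Fintype.card_fin, nsmul_eq_mul]
  push_cast
  have hk' : (k : ℝ) ≠ 0 := by positivity
  calc _ = ξ j d * ((Real.exp ε + 1) / (Real.exp ε - 1) *
        (Real.exp ε / (1 + Real.exp ε) - 1 / (1 + Real.exp ε))) := by field_simp; ring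
    _ = ξ j d := by rw [debiasConst_mul_mean_sign hε.ne', mul_one]

/-- If the entry's value equals the target value `d`, the expected debiased contribution
to the sketch cell `(j, h_j(d))` equals `ξ_j(d)`. -/
theorem stmt_7 (ε : ℝ) (hε : 0 < ε) (t k : ℕ) (hk : 0 < k) (D : Type)
    (h : Fin k → D → Fin (2^t)) (ξ : Fin k → D → ℝ)
    (hξ : ∀ j d, ξ j d = 1 ∨ ξ j d = -1)
    (d : D) (j : Fin k) :
    ∑ ω : Fin k × Fin (2^t) × Bool,
        sketchPMF ε k t ω * contrib ε k t (h j d) (h j d) (ξ j d) j ω = ξ j d :=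
  stmt_7_general ε hε t k hk D h ξ d j
end

section
/- With the same setup, if d^(i) ≠ d and the hashes are such that Pr[h_j(d^(i)) = h_j(d)] = 1/m (pairwise-uniform hashing), then E[M(j,h_j(d))^(i)] = ξ_j(d^(i)) · Pr[h_j(d^(i)) = h_j(d)] = ξ_j(d^(i))/m. More precisely, conditioning on deterministic hash values a = h_j(d^(i)), b = h_j(d), one has E[c_ε k B ξ_j(d^(i)) H_m[a,L] H_m[L,b] 1{J=j}] = ξ_j(d^(i)) · 1{a = b}. -/
/-!
Under `(J, L, B)` the debiased contribution factors into three independent pieces: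
`k · E[1{J = j}] = 1`, `c_ε · E[B] = 1` (this is what the constant `c_ε` is for), and
`E[H[a, L] H[L, b]] = 1{a = b}`, which is the orthogonality `H_m H_m = m I` of the Sylvester
matrix, proved by induction from its block form `[[H, H], [H, -H]]`. Averaging `s · 1{a = b}`
over hash values colliding with probability `1/m` then gives `s/m`.
-/

open Matrix

def finDouble (t : ℕ) : Fin (2^t) ⊕ Fin (2^t) ≃ Fin (2^(t+1)) :=
  finSumFinEquiv.trans (finCongr (by ring))

lemma finDouble_inl (t : ℕ) (l : Fin (2^t)) : (finDouble t (Sum.inl l) : ℕ) = l := by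
  simp [finDouble]

lemma finDouble_inr (t : ℕ) (l : Fin (2^t)) : (finDouble t (Sum.inr l) : ℕ) = 2^t + l := by
  simp [finDouble, add_comm]

lemma fromBlocks_smul_one {α l m : Type*} [Semiring α] [DecidableEq l] [DecidableEq m] (c : α) :
    fromBlocks (c • 1 : Matrix l l α) 0 0 (c • 1 : Matrix m m α) = c • 1 := by
  simp only [← fromBlocks_one, fromBlocks_smul, smul_zero]

lemma had_succ_submatrix (t : ℕ) :
    (Had (t+1)).submatrix (finDouble t) (finDouble t) =
      fromBlocks (Had t) (Had t) (Had t) (-Had t) := by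
  ext (i | i) (j | j) <;>
    simp only [submatrix_apply, fromBlocks_apply₁₁, fromBlocks_apply₁₂, fromBlocks_apply₂₁,
      fromBlocks_apply₂₂] <;>
    simp [Had, finDouble_inl, finDouble_inr, Nat.mod_eq_of_lt]

lemma had_mul_self (t : ℕ) : Had t * Had t = (2^t : ℝ) • 1 := by
  induction t with
  | zero => ext i j; rw [mul_apply]; simp [Had, Fin.fin_one_eq_zero i, Fin.fin_one_eq_zero j]
  | succ t ih =>
    have hblocks : Had (t+1) =
        (fromBlocks (Had t) (Had t) (Had t) (-Had t)).submatrix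
          (finDouble t).symm (finDouble t).symm := by
      rw [← had_succ_submatrix, submatrix_submatrix]
      simp
    rw [hblocks, submatrix_mul_equiv, fromBlocks_multiply]
    simp only [Matrix.mul_neg, Matrix.neg_mul, neg_neg, ih, add_neg_cancel, ← two_smul ℝ,
      smul_smul, ← pow_succ']
    rw [fromBlocks_smul_one]
    exact congrArg ((2:ℝ)^(t+1) • ·) (submatrix_one_equiv (α := ℝ) (finDouble t).symm)

lemma sum_had_mul_had (t : ℕ) (a b : Fin (2^t)) :
    ∑ l, Had t a l * Had t l b = if a = b then (2^t : ℝ) else 0 := by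
  rw [← mul_apply, had_mul_self, Matrix.smul_apply, one_apply, smul_eq_mul, mul_ite, mul_one,
    mul_zero]

lemma Fintype.sum_prod_prod_mul {α β γ R : Type*} [Fintype α] [Fintype β] [Fintype γ]
    [CommSemiring R] (f : α → R) (g : β → R) (h : γ → R) :
    ∑ ω : α × β × γ, f ω.1 * g ω.2.1 * h ω.2.2 = (∑ x, f x) * (∑ y, g y) * ∑ z, h z := by
  simp only [Fintype.sum_prod_type, ← Finset.mul_sum, ← Finset.sum_mul]

lemma randomizedResponse_debias {ε : ℝ} (hε : ε ≠ 0) :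
    ∑ B : Bool, (Real.exp ε + 1) / (Real.exp ε - 1) *
      ((if B then Real.exp ε / (1 + Real.exp ε) else 1 / (1 + Real.exp ε)) *
        (if B then 1 else -1)) = 1 := by
  have hsub : Real.exp ε - 1 ≠ 0 := sub_ne_zero.2 (mt (Real.exp_eq_one_iff ε).1 hε)
  have hadd : 1 + Real.exp ε ≠ 0 := by positivity
  simp only [Fintype.sum_bool, if_true, Bool.false_eq_true, if_false]
  field_simp
  ring

lemma sum_uniform_mul_indicator {k : ℕ} (j : Fin k) :
    ∑ J : Fin k, (1 : ℝ) / k * k * (if J = j then 1 else 0) = 1 := by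
  have : (k : ℝ) ≠ 0 := by exact_mod_cast j.pos.ne'
  simp [this]

lemma sum_uniform_had_mul_had (t : ℕ) (a b : Fin (2^t)) :
    ∑ L, (1 : ℝ) / 2^t * (Had t a L * Had t L b) = if a = b then 1 else 0 := by
  rw [← Finset.mul_sum, sum_had_mul_had]
  split_ifs <;> simp

lemma sum_sketchPMF_mul_contrib {ε : ℝ} (hε : ε ≠ 0) {k t : ℕ} (a b : Fin (2^t)) (s : ℝ)
    (j : Fin k) :
    ∑ ω, sketchPMF ε k t ω * contrib ε k t a b s j ω = s * if a = b then 1 else 0 := by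
  calc ∑ ω, sketchPMF ε k t ω * contrib ε k t a b s j ω
      = s * ((∑ J : Fin k, (1 : ℝ) / k * k * if J = j then 1 else 0) *
          (∑ L, (1 : ℝ) / 2^t * (Had t a L * Had t L b)) *
          ∑ B : Bool, (Real.exp ε + 1) / (Real.exp ε - 1) *
            ((if B then Real.exp ε / (1 + Real.exp ε) else 1 / (1 + Real.exp ε)) *
              (if B then 1 else -1))) := by
        rw [← Fintype.sum_prod_prod_mul, Finset.mul_sum]
        refine Fintype.sum_congr _ _ fun ω => ?_
        simp only [sketchPMF, contrib]
        ring
    _ = s * if a = b then 1 else 0 := by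
        rw [sum_uniform_mul_indicator, sum_uniform_had_mul_had, randomizedResponse_debias hε,
          one_mul, mul_one]

open Classical in
theorem stmt_8_general (ε : ℝ) (hε : 0 < ε) (t k : ℕ)
    (s : ℝ) (j : Fin k) :
    (∀ a b : Fin (2^t),
      ∑ ω : Fin k × Fin (2^t) × Bool,
        sketchPMF ε k t ω * contrib ε k t a b s j ω = s * (if a = b then 1 else 0)) ∧
    (∀ ν : Fin (2^t) × Fin (2^t) → ℝ, (∀ ab, 0 ≤ ν ab) → (∑ ab, ν ab = 1) →
      (∑ ab, (if ab.1 = ab.2 then ν ab else 0)) = (1 : ℝ)/2^t →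
      ∑ ab, ν ab * ∑ ω : Fin k × Fin (2^t) × Bool,
        sketchPMF ε k t ω * contrib ε k t ab.1 ab.2 s j ω = s / 2^t) := by
  refine ⟨fun a b => sum_sketchPMF_mul_contrib hε.ne' a b s j, fun ν _ _ hcollision => ?_⟩
  calc ∑ ab, ν ab * ∑ ω, sketchPMF ε k t ω * contrib ε k t ab.1 ab.2 s j ω
      = s * ∑ ab : Fin (2^t) × Fin (2^t), if ab.1 = ab.2 then ν ab else 0 := by
        simp only [sum_sketchPMF_mul_contrib hε.ne', Finset.mul_sum, mul_ite, mul_one, mul_zero]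
        refine Fintype.sum_congr _ _ fun ab => ?_
        split_ifs <;> ring
    _ = s / 2^t := by rw [hcollision, mul_one_div]

open Classical in
/-- For an entry with value `d⁽ⁱ⁾ ≠ d`, conditioning on deterministic hash cells
`a = h_j(d⁽ⁱ⁾)` and `b = h_j(d)`, the expected debiased contribution to cell `(j, b)`
is `ξ_j(d⁽ⁱ⁾) · 1{a = b}`; hence if the hash collides with probability `1/m`
(pairwise-uniform hashing), the expected contribution is `ξ_j(d⁽ⁱ⁾)/m`. -/
theorem stmt_8 (ε : ℝ) (hε : 0 < ε) (t k : ℕ) (hk : 0 < k)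
    (s : ℝ) (hs : s = 1 ∨ s = -1) (j : Fin k) :
    (∀ a b : Fin (2^t),
      ∑ ω : Fin k × Fin (2^t) × Bool,
        sketchPMF ε k t ω * contrib ε k t a b s j ω = s * (if a = b then 1 else 0)) ∧
    (∀ ν : Fin (2^t) × Fin (2^t) → ℝ, (∀ ab, 0 ≤ ν ab) → (∑ ab, ν ab = 1) →
      (∑ ab, (if ab.1 = ab.2 then ν ab else 0)) = (1 : ℝ)/2^t →
      ∑ ab, ν ab * ∑ ω : Fin k × Fin (2^t) × Bool,
        sketchPMF ε k t ω * contrib ε k t ab.1 ab.2 s j ω = s / 2^t) :=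
  stmt_8_general ε hε t k s j
end

section
/- Let X₁ = c_ε k B₁ ξ(d₁) H[a₁,L₁] H[L₁,x] 1{J₁=j} and X₂ = c_ε k B₂ ξ(d₂) H[a₂,L₂] H[L₂,x] 1{J₂=j} be two debiased contributions to the same cell (j,x) of one sketch, where a₁ = h_j(d₁) = a₂ = h_j(d₂) = x. Then: (1) if the two contributions come from the same user (i.e., J₁=J₂, L₁=L₂, B₁=B₂, d₁=d₂), E[X₁X₂] = c_ε² k; (2) if they come from different users (independent randomness) with d₁ = d₂, E[X₁X₂] = 1; (3) if different users with d₁ ≠ d₂ and ξ pairwise independent uniform on {±1}, E[X₁X₂] = 0. -/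
lemma had_symm : ∀ (t : ℕ) (i j : Fin (2^t)), Had t i j = Had t j i
  | 0, _, _ => rfl
  | (t+1), i, j => by
      simp only [Had]
      congr 1
      · simp only [and_comm]
      · exact had_symm t _ _

lemma had_pm : ∀ (t : ℕ) (i j : Fin (2^t)), Had t i j = 1 ∨ Had t i j = -1
  | 0, _, _ => Or.inl rfl
  | (t+1), i, j => by
      simp only [Had]
      rcases had_pm t ⟨(i : ℕ) % 2^t, Nat.mod_lt _ (by positivity)⟩
        ⟨(j : ℕ) % 2^t, Nat.mod_lt _ (by positivity)⟩ with h | h <;>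
        rw [h] <;> split <;> norm_num

lemma first_moment (ε : ℝ) (hε : 0 < ε) (t k : ℕ) (hk : 0 < k) (x : Fin (2^t))
    (s : ℝ) (j : Fin k) :
    ∑ ω : Fin k × Fin (2^t) × Bool, sketchPMF ε k t ω * contrib ε k t x x s j ω = s := by
  have he : (1 : ℝ) < Real.exp ε := by
    rw [← Real.exp_zero]; exact Real.exp_lt_exp.mpr hε
  have he1 : Real.exp ε - 1 ≠ 0 := by linarith
  have he2 : 1 + Real.exp ε ≠ 0 := by linarith
  have hk' : (k : ℝ) ≠ 0 := Nat.cast_ne_zero.mpr hk.ne'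
  have hm : ((2:ℝ)^t) ≠ 0 := by positivity
  have hstep : ∀ ω : Fin k × Fin (2^t) × Bool,
      sketchPMF ε k t ω * contrib ε k t x x s j ω =
      (if ω.1 = j then (1:ℝ) else 0) *
        ((1/(k:ℝ)) * (1/(2:ℝ)^t) * ((Real.exp ε + 1)/(Real.exp ε - 1)) * k * s) *
        (if ω.2.2 then Real.exp ε / (1 + Real.exp ε) else -(1 / (1 + Real.exp ε))) := by
    rintro ⟨J, L, B⟩
    simp only [sketchPMF, contrib]
    rw [show Had t L x = Had t x L from had_symm t L x]
    rcases had_pm t x L with h | h <;> rw [h] <;> cases B <;>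
      by_cases hJ : J = j <;> simp [hJ] <;> ring
  simp_rw [hstep]
  simp only [Fintype.sum_prod_type, Fintype.sum_bool]
  simp only [if_true, if_false, Bool.false_eq_true, ite_mul, mul_ite, one_mul,
    zero_mul, mul_zero]
  simp only [Finset.sum_const, Finset.card_univ, Fintype.card_fin, nsmul_eq_mul,
    mul_add, mul_ite, mul_zero]
  rw [Finset.sum_add_distrib, Finset.sum_ite_eq' Finset.univ j,
    Finset.sum_ite_eq' Finset.univ j]
  simp only [Finset.mem_univ, if_true]
  push_cast
  field_simp
  ring

lemma second_moment (ε : ℝ) (hε : 0 < ε) (t k : ℕ) (hk : 0 < k) (x : Fin (2^t))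
    (s : ℝ) (hs : s = 1 ∨ s = -1) (j : Fin k) :
    ∑ ω : Fin k × Fin (2^t) × Bool, sketchPMF ε k t ω * (contrib ε k t x x s j ω)^2
      = ((Real.exp ε + 1)/(Real.exp ε - 1))^2 * k := by
  have he : (1 : ℝ) < Real.exp ε := by
    rw [← Real.exp_zero]; exact Real.exp_lt_exp.mpr hε
  have he1 : Real.exp ε - 1 ≠ 0 := by linarith
  have he2 : 1 + Real.exp ε ≠ 0 := by linarith
  have hk' : (k : ℝ) ≠ 0 := Nat.cast_ne_zero.mpr hk.ne'
  have hm : ((2:ℝ)^t) ≠ 0 := by positivity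
  have hstep : ∀ ω : Fin k × Fin (2^t) × Bool,
      sketchPMF ε k t ω * (contrib ε k t x x s j ω)^2 =
      (if ω.1 = j then (1:ℝ) else 0) *
        ((1/(k:ℝ)) * (1/(2:ℝ)^t) * ((Real.exp ε + 1)/(Real.exp ε - 1))^2 * (k:ℝ)^2) *
        (if ω.2.2 then Real.exp ε / (1 + Real.exp ε) else (1 / (1 + Real.exp ε))) := by
    rintro ⟨J, L, B⟩
    simp only [sketchPMF, contrib]
    rw [show Had t L x = Had t x L from had_symm t L x]
    rcases had_pm t x L with h | h <;> rcases hs with hs' | hs' <;>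
      rw [h, hs'] <;> cases B <;> by_cases hJ : J = j <;> simp [hJ] <;> ring
  simp_rw [hstep]
  simp only [Fintype.sum_prod_type, Fintype.sum_bool]
  simp only [if_true, if_false, Bool.false_eq_true, ite_mul, mul_ite, one_mul,
    zero_mul, mul_zero]
  simp only [Finset.sum_const, Finset.card_univ, Fintype.card_fin, nsmul_eq_mul,
    mul_add, mul_ite, mul_zero]
  rw [Finset.sum_add_distrib, Finset.sum_ite_eq' Finset.univ j,
    Finset.sum_ite_eq' Finset.univ j]
  simp only [Finset.mem_univ, if_true]
  push_cast
  field_simp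
  ring

open Classical in
/-- Product of two debiased contributions to the same cell `(j,x)` of one sketch,
with `ξ` a 2-wise independent uniform random sign function and `h(d₁) = h(d₂) = x`:
(1) for a single user, `E[X²] = c_ε² k`; (2) for two distinct users with `d₁ = d₂`,
`E[X₁X₂] = 1`; (3) for two distinct users with `d₁ ≠ d₂`, `E[X₁X₂] = 0`. -/
theorem stmt_10 (ε : ℝ) (hε : 0 < ε) (t k : ℕ) (hk : 0 < k) (D : Type)
    (Ξ : Type) [Fintype Ξ] (ρ : Ξ → ℝ) (hρ0 : ∀ e, 0 ≤ ρ e) (hρ1 : ∑ e, ρ e = 1)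
    (ξ : Ξ → D → ℝ) (hξval : ∀ e x, ξ e x = 1 ∨ ξ e x = -1)
    (hξ2 : ∀ x x' : D, x ≠ x' → ∀ s s' : ℝ, (s = 1 ∨ s = -1) → (s' = 1 ∨ s' = -1) →
      (∑ e, if ξ e x = s ∧ ξ e x' = s' then ρ e else 0) = 1/4)
    (h : D → Fin (2^t)) (j : Fin k) (x : Fin (2^t)) (d₁ d₂ : D)
    (h₁ : h d₁ = x) (h₂ : h d₂ = x) :
    (∑ e, ∑ ω : Fin k × Fin (2^t) × Bool,
        ρ e * sketchPMF ε k t ω * (contrib ε k t (h d₁) x (ξ e d₁) j ω)^2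
      = ((Real.exp ε + 1)/(Real.exp ε - 1))^2 * k) ∧
    (d₁ = d₂ →
      ∑ e, ∑ ω₁ : Fin k × Fin (2^t) × Bool, ∑ ω₂ : Fin k × Fin (2^t) × Bool,
        ρ e * sketchPMF ε k t ω₁ * sketchPMF ε k t ω₂ *
          (contrib ε k t (h d₁) x (ξ e d₁) j ω₁ * contrib ε k t (h d₂) x (ξ e d₂) j ω₂)
      = 1) ∧
    (d₁ ≠ d₂ →
      ∑ e, ∑ ω₁ : Fin k × Fin (2^t) × Bool, ∑ ω₂ : Fin k × Fin (2^t) × Bool,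
        ρ e * sketchPMF ε k t ω₁ * sketchPMF ε k t ω₂ *
          (contrib ε k t (h d₁) x (ξ e d₁) j ω₁ * contrib ε k t (h d₂) x (ξ e d₂) j ω₂)
      = 0) := by
  rw [h₁, h₂]
  have key : ∀ e, ∑ ω₁ : Fin k × Fin (2^t) × Bool, ∑ ω₂ : Fin k × Fin (2^t) × Bool,
      ρ e * sketchPMF ε k t ω₁ * sketchPMF ε k t ω₂ *
        (contrib ε k t x x (ξ e d₁) j ω₁ * contrib ε k t x x (ξ e d₂) j ω₂)
      = ρ e * (ξ e d₁ * ξ e d₂) := by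
    intro e
    have h1 := first_moment ε hε t k hk x (ξ e d₁) j
    have h2 := first_moment ε hε t k hk x (ξ e d₂) j
    calc ∑ ω₁ : Fin k × Fin (2^t) × Bool, ∑ ω₂ : Fin k × Fin (2^t) × Bool,
        ρ e * sketchPMF ε k t ω₁ * sketchPMF ε k t ω₂ *
          (contrib ε k t x x (ξ e d₁) j ω₁ * contrib ε k t x x (ξ e d₂) j ω₂)
        = ρ e * ((∑ ω₁ : Fin k × Fin (2^t) × Bool,
              sketchPMF ε k t ω₁ * contrib ε k t x x (ξ e d₁) j ω₁) *
            (∑ ω₂ : Fin k × Fin (2^t) × Bool,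
              sketchPMF ε k t ω₂ * contrib ε k t x x (ξ e d₂) j ω₂)) := by
          rw [Finset.sum_mul_sum, Finset.mul_sum]
          refine Finset.sum_congr rfl fun ω₁ _ => ?_
          rw [Finset.mul_sum]
          exact Finset.sum_congr rfl fun ω₂ _ => by ring
      _ = ρ e * (ξ e d₁ * ξ e d₂) := by rw [h1, h2]
  refine ⟨?_, ?_, ?_⟩
  · have : ∀ e, ∑ ω : Fin k × Fin (2^t) × Bool,
        ρ e * sketchPMF ε k t ω * (contrib ε k t x x (ξ e d₁) j ω)^2
        = ρ e * (((Real.exp ε + 1)/(Real.exp ε - 1))^2 * k) := by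
      intro e
      rw [← second_moment ε hε t k hk x (ξ e d₁) (hξval e d₁) j, Finset.mul_sum]
      exact Finset.sum_congr rfl fun ω _ => by ring
    simp_rw [this]
    rw [← Finset.sum_mul, hρ1, one_mul]
  · intro hd
    subst hd
    simp_rw [key]
    have : ∀ e, ρ e * (ξ e d₁ * ξ e d₁) = ρ e := fun e => by
      rcases hξval e d₁ with h' | h' <;> rw [h'] <;> ring
    simp_rw [this]
    exact hρ1
  · intro hne
    simp_rw [key]
    have split : ∀ e, ρ e * (ξ e d₁ * ξ e d₂) =
        ((if ξ e d₁ = 1 ∧ ξ e d₂ = 1 then ρ e else 0) +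
          (if ξ e d₁ = -1 ∧ ξ e d₂ = -1 then ρ e else 0)) -
        ((if ξ e d₁ = 1 ∧ ξ e d₂ = -1 then ρ e else 0) +
          (if ξ e d₁ = -1 ∧ ξ e d₂ = 1 then ρ e else 0)) := by
      intro e
      rcases hξval e d₁ with h1 | h1 <;> rcases hξval e d₂ with h2 | h2 <;>
        rw [h1, h2] <;> norm_num
    simp_rw [split]
    rw [Finset.sum_sub_distrib, Finset.sum_add_distrib, Finset.sum_add_distrib,
      hξ2 d₁ d₂ hne 1 1 (Or.inl rfl) (Or.inl rfl),
      hξ2 d₁ d₂ hne (-1) (-1) (Or.inr rfl) (Or.inr rfl),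
      hξ2 d₁ d₂ hne 1 (-1) (Or.inl rfl) (Or.inr rfl),
      hξ2 d₁ d₂ hne (-1) 1 (Or.inr rfl) (Or.inl rfl)]
    ring
end

section
/- Let f : D → ℕ be the frequency function of a multiset of n values, k·c_ε² ≥ 1, and fix a line j and cell x. Suppose the sketch cell value is M[j,x] = Σ_i X_i where the X_i are the debiased contributions of the n data entries, satisfying the pairwise product expectations: E[X_{i₁}X_{i₂}] = c_ε²k if i₁=i₂; = 1 if i₁≠i₂ and the entries equal; = ξ_j(d)ξ_j(d') (deterministic hash-sign product) if the entries are distinct values d ≠ d' both hashing to x. Then E[(M[j,x])²] = Σ_{d : h_j(d)=x} [(k c_ε² − 1) f(d) + f(d)²] + Σ_{d ≠ d', h_j(d)=h_j(d')=x} f(d) f(d') ξ_j(d) ξ_j(d'). -/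
open Classical in
/-- Second moment of a sketch cell: if the cell value is the sum of the debiased
contributions `X_i` of `n` entries, all hashing to cell `x`, with the stated pairwise
product expectations, then
`E[(M[j,x])²] = ∑_{d : h_j(d)=x} [(k c_ε² − 1) f(d) + f(d)²]
  + ∑_{d ≠ d', h_j(d)=h_j(d')=x} f(d) f(d') ξ_j(d) ξ_j(d')`. -/
theorem stmt_11 (ε : ℝ) (k : ℕ)
    (hc : 1 ≤ (k : ℝ) * ((Real.exp ε + 1)/(Real.exp ε - 1))^2)
    (D : Type) [Fintype D] (I : Type) (h : D → I) (x : I)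
    (Ω : Type) [Fintype Ω] (μ : Ω → ℝ) (hμ0 : ∀ ω, 0 ≤ μ ω) (hμ1 : ∑ ω, μ ω = 1)
    (n : ℕ) (data : Fin n → D) (hdata : ∀ i, h (data i) = x)
    (X : Fin n → Ω → ℝ) (ξ : D → ℝ) (hξ : ∀ d, ξ d = 1 ∨ ξ d = -1)
    (hpair : ∀ i₁ i₂ : Fin n, ∑ ω, μ ω * (X i₁ ω * X i₂ ω) =
      if i₁ = i₂ then ((Real.exp ε + 1)/(Real.exp ε - 1))^2 * k
      else if data i₁ = data i₂ then 1
      else ξ (data i₁) * ξ (data i₂)) :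
    ∑ ω, μ ω * (∑ i, X i ω)^2 =
      (∑ d ∈ Finset.univ.filter (fun d : D => h d = x),
        (((k : ℝ) * ((Real.exp ε + 1)/(Real.exp ε - 1))^2 - 1) *
            ((Finset.univ.filter (fun i : Fin n => data i = d)).card : ℝ) +
          ((Finset.univ.filter (fun i : Fin n => data i = d)).card : ℝ)^2))
      + ∑ d ∈ Finset.univ.filter (fun d : D => h d = x),
          ∑ d' ∈ Finset.univ.filter (fun d' : D => d' ≠ d ∧ h d' = x),
            ((Finset.univ.filter (fun i : Fin n => data i = d)).card : ℝ) *
              ((Finset.univ.filter (fun i : Fin n => data i = d')).card : ℝ) *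
              ξ d * ξ d' := by
  classical
  set c : ℝ := ((Real.exp ε + 1)/(Real.exp ε - 1))^2 with hcdef
  set F : D → Finset (Fin n) := fun d => Finset.univ.filter (fun i : Fin n => data i = d)
    with hFdef
  set v : Fin n → Fin n → ℝ := fun i₁ i₂ =>
    if i₁ = i₂ then c * k else if data i₁ = data i₂ then 1
    else ξ (data i₁) * ξ (data i₂) with hvdef
  have mem_F : ∀ (d : D) (i : Fin n), i ∈ F d ↔ data i = d := by
    intro d i; simp [hFdef]
  have hf0 : ∀ d : D, h d ≠ x → (F d).card = 0 := by
    intro d hd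
    rw [Finset.card_eq_zero, Finset.filter_eq_empty_iff]
    intro i _ hi
    exact hd (hi ▸ hdata i)
  -- Step 1: expectation of square is the double sum of pairwise expectations.
  have step1 : ∑ ω, μ ω * (∑ i, X i ω)^2
      = ∑ i₁ : Fin n, ∑ i₂ : Fin n, v i₁ i₂ := by
    have h1 : ∀ ω, μ ω * (∑ i, X i ω)^2
        = ∑ i₁ : Fin n, ∑ i₂ : Fin n, μ ω * (X i₁ ω * X i₂ ω) := by
      intro ω
      rw [sq, Finset.sum_mul_sum, Finset.mul_sum]
      exact Finset.sum_congr rfl fun i₁ _ => by rw [Finset.mul_sum]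
    rw [Finset.sum_congr rfl fun ω _ => h1 ω, Finset.sum_comm]
    refine Finset.sum_congr rfl fun i₁ _ => ?_
    rw [Finset.sum_comm]
    exact Finset.sum_congr rfl fun i₂ _ => hpair i₁ i₂
  rw [step1]
  -- diagonal fibers
  have diag : ∀ d : D, ∑ i₁ ∈ F d, ∑ i₂ ∈ F d, v i₁ i₂
      = ((k : ℝ) * c - 1) * (F d).card + ((F d).card : ℝ)^2 := by
    intro d
    have hv : ∀ i₁ ∈ F d, ∀ i₂ ∈ F d, v i₁ i₂
        = (if i₁ = i₂ then c * k - 1 else 0) + 1 := by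
      intro i₁ h₁ i₂ h₂
      rcases eq_or_ne i₁ i₂ with rfl | hne
      · simp [hvdef]
      · have : data i₁ = data i₂ := by
          rw [(mem_F d i₁).1 h₁, (mem_F d i₂).1 h₂]
        simp [hvdef, hne, this]
    calc ∑ i₁ ∈ F d, ∑ i₂ ∈ F d, v i₁ i₂
        = ∑ i₁ ∈ F d, ∑ i₂ ∈ F d, ((if i₁ = i₂ then c * k - 1 else 0) + 1) :=
          Finset.sum_congr rfl fun i₁ h₁ => Finset.sum_congr rfl fun i₂ h₂ =>
            hv i₁ h₁ i₂ h₂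
      _ = ∑ i₁ ∈ F d, ((c * k - 1) + ((F d).card : ℝ)) := by
          refine Finset.sum_congr rfl fun i₁ h₁ => ?_
          rw [Finset.sum_add_distrib, Finset.sum_ite_eq (F d) i₁ (fun _ => c * k - 1),
            if_pos h₁]
          simp
      _ = ((k : ℝ) * c - 1) * (F d).card + ((F d).card : ℝ)^2 := by
          rw [Finset.sum_const, nsmul_eq_mul]
          ring
  -- off-diagonal fibers
  have off : ∀ d d' : D, d' ≠ d → ∑ i₁ ∈ F d, ∑ i₂ ∈ F d', v i₁ i₂
      = ((F d).card : ℝ) * ((F d').card : ℝ) * ξ d * ξ d' := by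
    intro d d' hne
    have hv : ∀ i₁ ∈ F d, ∀ i₂ ∈ F d', v i₁ i₂ = ξ d * ξ d' := by
      intro i₁ h₁ i₂ h₂
      have hd1 : data i₁ = d := (mem_F d i₁).1 h₁
      have hd2 : data i₂ = d' := (mem_F d' i₂).1 h₂
      have hdd : data i₁ ≠ data i₂ := by rw [hd1, hd2]; exact fun e => hne e.symm
      have hii : i₁ ≠ i₂ := fun e => hdd (e ▸ rfl)
      simp only [hvdef]
      rw [if_neg hii, if_neg hdd, hd1, hd2]
    rw [Finset.sum_congr rfl fun i₁ h₁ =>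
      Finset.sum_congr rfl fun i₂ h₂ => hv i₁ h₁ i₂ h₂]
    simp [Finset.sum_const, nsmul_eq_mul]
    ring
  -- regroup the double sum by fibers
  have regroup : ∑ i₁ : Fin n, ∑ i₂ : Fin n, v i₁ i₂
      = ∑ d : D, ∑ d' : D, ∑ i₁ ∈ F d, ∑ i₂ ∈ F d', v i₁ i₂ := by
    rw [← Finset.sum_fiberwise Finset.univ data (fun i₁ => ∑ i₂ : Fin n, v i₁ i₂)]
    refine Finset.sum_congr rfl fun d _ => ?_
    have h2 : ∀ i₁ : Fin n, ∑ i₂ : Fin n, v i₁ i₂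
        = ∑ d' : D, ∑ i₂ ∈ F d', v i₁ i₂ :=
      fun i₁ => (Finset.sum_fiberwise Finset.univ data (fun i₂ => v i₁ i₂)).symm
    rw [Finset.sum_congr rfl fun i₁ _ => h2 i₁]
    exact Finset.sum_comm
  rw [regroup]
  have split : ∀ d : D, ∑ d' : D, ∑ i₁ ∈ F d, ∑ i₂ ∈ F d', v i₁ i₂
      = ((((k : ℝ) * c - 1) * (F d).card + ((F d).card : ℝ)^2)
        + ∑ d' ∈ Finset.univ.erase d,
            ((F d).card : ℝ) * ((F d').card : ℝ) * ξ d * ξ d') := by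
    intro d
    rw [← Finset.add_sum_erase Finset.univ _ (Finset.mem_univ d), diag d]
    congr 1
    exact Finset.sum_congr rfl fun d' hd' => off d d' (Finset.ne_of_mem_erase hd')
  rw [Finset.sum_congr rfl fun d _ => split d, Finset.sum_add_distrib]
  congr 1
  · refine (Finset.sum_subset (Finset.filter_subset _ _) ?_).symm
    intro d _ hd
    have h0 : (F d).card = 0 := hf0 d (by simpa using hd)
    simp [h0]
  · symm
    calc ∑ d ∈ Finset.univ.filter (fun d : D => h d = x),
          ∑ d' ∈ Finset.univ.filter (fun d' : D => d' ≠ d ∧ h d' = x),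
            ((F d).card : ℝ) * ((F d').card : ℝ) * ξ d * ξ d'
        = ∑ d ∈ Finset.univ.filter (fun d : D => h d = x),
            ∑ d' ∈ Finset.univ.erase d,
              ((F d).card : ℝ) * ((F d').card : ℝ) * ξ d * ξ d' := by
          refine Finset.sum_congr rfl fun d _ => ?_
          refine Finset.sum_subset ?_ ?_
          · intro d' hd'
            rw [Finset.mem_filter] at hd'
            exact Finset.mem_erase.2 ⟨hd'.2.1, Finset.mem_univ _⟩
          · intro d' hd' hns
            have hne : d' ≠ d := (Finset.mem_erase.1 hd').1
            have hx : h d' ≠ x := by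
              intro hx
              exact hns (Finset.mem_filter.2 ⟨Finset.mem_univ _, hne, hx⟩)
            simp [hf0 d' hx]
      _ = ∑ d : D, ∑ d' ∈ Finset.univ.erase d,
            ((F d).card : ℝ) * ((F d').card : ℝ) * ξ d * ξ d' := by
          refine Finset.sum_subset (Finset.filter_subset _ _) ?_
          intro d _ hd
          have h0 : (F d).card = 0 := hf0 d (by simpa using hd)
          simp [h0]
end

section
/- For a non-target value processed by FAP, the debiased contribution to cell (j,x) is M(j,x) = c_ε k B H_m[x,L] H_m[L,R] 1{J=j}, with J ~ Uniform{0,...,k-1}, L, R ~ Uniform{0,...,m-1}, B ∈ {±1} with E[B] = 1/c_ε, all independent, and H_m the Sylvester Hadamard matrix. Then E[M(j,x)] = 1/m. Consequently, if NT is a multiset of non-target entries of total size |NT|, the expected total contribution of NT to each cell (j,x) is |NT|/m. -/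
lemma had_col0 (t : ℕ) (i : Fin (2^t)) (z : Fin (2^t)) (hz : (z : ℕ) = 0) :
    Had t i z = 1 := by
  induction t with
  | zero => simp [Had]
  | succ t ih =>
    have hp : 0 < 2^t := by positivity
    simp only [Had, hz]
    rw [if_neg (fun h => absurd h.2 (by omega))]
    rw [one_mul]
    exact ih _ _ (by simp)

lemma had_rowsum (t : ℕ) (i : Fin (2^t)) :
    ∑ r : Fin (2^t), Had t i r = if (i : ℕ) = 0 then (2^t : ℝ) else 0 := by
  induction t with
  | zero => simp [Had, Fin.val_eq_zero]
  | succ t ih =>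
    have hp : 0 < 2^t := by positivity
    have hlt : ∀ n, n % 2^t < 2^t := fun n => Nat.mod_lt _ hp
    obtain ⟨iv, hilt⟩ := i
    have key : ∑ r : Fin (2^(t+1)), Had (t+1) ⟨iv, hilt⟩ r
        = ∑ n ∈ Finset.range (2^(t+1)),
            ((if 2^t ≤ iv ∧ 2^t ≤ n then (-1 : ℝ) else 1) *
              Had t ⟨iv % 2^t, hlt _⟩ ⟨n % 2^t, hlt _⟩) := by
      rw [← Fin.sum_univ_eq_sum_range (fun n =>
        ((if 2^t ≤ iv ∧ 2^t ≤ n then (-1 : ℝ) else 1) *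
          Had t ⟨iv % 2^t, hlt _⟩ ⟨n % 2^t, hlt _⟩))]
      apply Finset.sum_congr rfl
      intro r _
      simp only [Had]
    rw [key]
    simp only [Fin.val_mk]
    have h2 : (2:ℕ)^(t+1) = 2^t + 2^t := by ring
    rw [show Finset.range (2^(t+1)) = Finset.range (2^t + 2^t) from by rw [h2], Finset.sum_range_add]
    have e1 : ∑ n ∈ Finset.range (2^t),
        ((if 2^t ≤ iv ∧ 2^t ≤ n then (-1 : ℝ) else 1) *
          Had t ⟨iv % 2^t, hlt _⟩ ⟨n % 2^t, hlt _⟩)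
        = ∑ r : Fin (2^t), Had t ⟨iv % 2^t, hlt _⟩ r := by
      rw [← Fin.sum_univ_eq_sum_range (fun n =>
        ((if 2^t ≤ iv ∧ 2^t ≤ n then (-1 : ℝ) else 1) *
          Had t ⟨iv % 2^t, hlt _⟩ ⟨n % 2^t, hlt _⟩))]
      apply Finset.sum_congr rfl
      intro r _
      rw [if_neg (fun h => absurd h.2 (Nat.not_le.mpr r.isLt))]
      rw [one_mul]
      congr 1
      exact Fin.ext (Nat.mod_eq_of_lt r.isLt)
    have e2 : ∑ n ∈ Finset.range (2^t),
        ((if 2^t ≤ iv ∧ 2^t ≤ (2^t + n) then (-1 : ℝ) else 1) *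
          Had t ⟨iv % 2^t, hlt _⟩ ⟨(2^t + n) % 2^t, hlt _⟩)
        = (if 2^t ≤ iv then (-1:ℝ) else 1) *
            ∑ r : Fin (2^t), Had t ⟨iv % 2^t, hlt _⟩ r := by
      rw [Finset.mul_sum, ← Fin.sum_univ_eq_sum_range (fun n =>
        ((if 2^t ≤ iv ∧ 2^t ≤ (2^t + n) then (-1 : ℝ) else 1) *
          Had t ⟨iv % 2^t, hlt _⟩ ⟨(2^t + n) % 2^t, hlt _⟩))]
      apply Finset.sum_congr rfl
      intro r _
      have hm : (2^t + (r:ℕ)) % 2^t = (r:ℕ) := by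
        rw [Nat.add_mod_left]; exact Nat.mod_eq_of_lt r.isLt
      by_cases hi : 2^t ≤ iv
      · rw [if_pos ⟨hi, Nat.le_add_right _ _⟩, if_pos hi]
        congr 2
        exact Fin.ext hm
      · rw [if_neg (by tauto), if_neg hi, one_mul, one_mul]
        congr 1
        exact Fin.ext hm
    rw [e1, e2, ih ⟨iv % 2^t, hlt _⟩]
    simp only [Fin.val_mk]
    by_cases hi : 2^t ≤ iv
    · have h0 : ¬ iv = 0 := by omega
      rw [if_pos hi, if_neg h0]
      ring
    · have hm : iv % 2^t = iv := Nat.mod_eq_of_lt (by omega)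
      simp only [hm, if_neg hi]
      by_cases h0 : iv = 0 <;> simp [h0] <;> ring

lemma had_key (t : ℕ) (x : Fin (2^t)) :
    ∑ L : Fin (2^t), ∑ R : Fin (2^t), Had t x L * Had t L R = 2^t := by
  have h : ∀ L : Fin (2^t), ∑ R : Fin (2^t), Had t x L * Had t L R
      = Had t x L * (if (L:ℕ) = 0 then (2^t:ℝ) else 0) := fun L => by
    rw [← Finset.mul_sum, had_rowsum]
  simp_rw [h]
  have hz : (0:ℕ) < 2^t := by positivity
  rw [Finset.sum_eq_single (⟨0, hz⟩ : Fin (2^t))]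
  · rw [if_pos rfl, had_col0 t x _ rfl, one_mul]
  · intro b _ hb
    rw [if_neg (fun hh => hb (Fin.ext hh)), mul_zero]
  · intro hcon
    exact absurd (Finset.mem_univ _) hcon


open Classical in
/-- For a non-target value processed by FAP, the expected debiased contribution
`c_ε k B H_m[x,L] H_m[L,R] 1{J=j}` to each sketch cell `(j,x)` equals `1/m`;
consequently a multiset of `|NT|` non-target entries contributes `|NT|/m` to each cell
in expectation. -/
theorem stmt_16 (ε : ℝ) (hε : 0 < ε) (t k : ℕ) (hk : 0 < k)
    (j : Fin k) (x : Fin (2^t)) :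
    (∑ ω : Fin k × Fin (2^t) × Fin (2^t) × Bool,
        (((1:ℝ)/k) * ((1:ℝ)/2^t) * ((1:ℝ)/2^t) *
          (if ω.2.2.2 then Real.exp ε / (1 + Real.exp ε) else 1 / (1 + Real.exp ε))) *
        (((Real.exp ε + 1)/(Real.exp ε - 1)) * k * (if ω.2.2.2 then (1:ℝ) else -1) *
          Had t x ω.2.1 * Had t ω.2.1 ω.2.2.1 * (if ω.1 = j then 1 else 0))
      = (1 : ℝ)/2^t) ∧
    ∀ nNT : ℕ,
      (nNT : ℝ) *
        (∑ ω : Fin k × Fin (2^t) × Fin (2^t) × Bool,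
          (((1:ℝ)/k) * ((1:ℝ)/2^t) * ((1:ℝ)/2^t) *
            (if ω.2.2.2 then Real.exp ε / (1 + Real.exp ε) else 1 / (1 + Real.exp ε))) *
          (((Real.exp ε + 1)/(Real.exp ε - 1)) * k * (if ω.2.2.2 then (1:ℝ) else -1) *
            Had t x ω.2.1 * Had t ω.2.1 ω.2.2.1 * (if ω.1 = j then 1 else 0)))
      = (nNT : ℝ)/2^t := by
  have he1 : (1:ℝ) < Real.exp ε := by
    calc (1:ℝ) = Real.exp 0 := Real.exp_zero.symm
    _ < Real.exp ε := Real.exp_lt_exp.mpr hε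
  have hden : Real.exp ε - 1 ≠ 0 := by linarith
  have hden2 : (1:ℝ) + Real.exp ε ≠ 0 := by positivity
  have hk' : (k:ℝ) ≠ 0 := Nat.cast_ne_zero.mpr hk.ne'
  have hm : ((2:ℝ)^t) ≠ 0 := by positivity
  set D : ℝ := ((1:ℝ)/k) * ((1:ℝ)/2^t) * ((1:ℝ)/2^t) *
      ((Real.exp ε + 1)/(Real.exp ε - 1)) * k *
      ((Real.exp ε - 1)/(1 + Real.exp ε)) with hD
  have hS : (∑ ω : Fin k × Fin (2^t) × Fin (2^t) × Bool,
        (((1:ℝ)/k) * ((1:ℝ)/2^t) * ((1:ℝ)/2^t) *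
          (if ω.2.2.2 then Real.exp ε / (1 + Real.exp ε) else 1 / (1 + Real.exp ε))) *
        (((Real.exp ε + 1)/(Real.exp ε - 1)) * k * (if ω.2.2.2 then (1:ℝ) else -1) *
          Had t x ω.2.1 * Had t ω.2.1 ω.2.2.1 * (if ω.1 = j then 1 else 0)))
      = (1 : ℝ)/2^t := by
    have expand : (∑ ω : Fin k × Fin (2^t) × Fin (2^t) × Bool,
        (((1:ℝ)/k) * ((1:ℝ)/2^t) * ((1:ℝ)/2^t) *
          (if ω.2.2.2 then Real.exp ε / (1 + Real.exp ε) else 1 / (1 + Real.exp ε))) *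
        (((Real.exp ε + 1)/(Real.exp ε - 1)) * k * (if ω.2.2.2 then (1:ℝ) else -1) *
          Had t x ω.2.1 * Had t ω.2.1 ω.2.2.1 * (if ω.1 = j then 1 else 0)))
        = ∑ a : Fin k, ∑ b : Fin (2^t), ∑ c : Fin (2^t),
            (if a = j then (1:ℝ) else 0) * (D * (Had t x b * Had t b c)) := by
      rw [Fintype.sum_prod_type]
      refine Finset.sum_congr rfl (fun a _ => ?_)
      rw [Fintype.sum_prod_type]
      refine Finset.sum_congr rfl (fun b _ => ?_)
      rw [Fintype.sum_prod_type]
      refine Finset.sum_congr rfl (fun c _ => ?_)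
      rw [Fintype.sum_bool]
      simp only [if_true, Bool.false_eq_true, if_false, hD]
      ring
    rw [expand]
    have h2 : ∀ a : Fin k, ∑ b : Fin (2^t), ∑ c : Fin (2^t),
        (if a = j then (1:ℝ) else 0) * (D * (Had t x b * Had t b c))
        = (if a = j then (1:ℝ) else 0) * (D * 2^t) := by
      intro a
      simp_rw [← Finset.mul_sum]
      congr 2
      rw [← had_key t x]
      exact Finset.sum_congr rfl fun L _ => Finset.mul_sum _ _ _
    simp_rw [h2]
    rw [← Finset.sum_mul]
    have h3 : ∑ a : Fin k, (if a = j then (1:ℝ) else 0) = 1 := by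
      simp [Finset.sum_ite_eq']
    rw [h3, one_mul, hD]
    field_simp
    ring
  exact ⟨hS, fun nNT => by rw [hS, mul_one_div]⟩
end

section
/- Let A and B be finite multisets over a common finite domain D with frequency functions f_A, f_B. Fix a line j, a hash h_j : D → {0,...,m-1}, and a random sign function ξ_j : D → {±1} that is 2-wise independent and uniform. Suppose the sketch cells satisfy, for all x, M_A[j,x] = Σ_{d : h_j(d)=x} f_A(d)·ξ_j(d) + (zero-mean noise independent across the two sketches with the stated product structure), and similarly for M_B, such that the cross-user product expectations are as in the two-sketch product lemma (E = 1 for equal values, 0 for distinct values). Then E[Σ_{x=0}^{m-1} M_A[j,x]·M_B[j,x]] = Σ_{d ∈ D} f_A(d)·f_B(d) = |A ⋈ B|, i.e., each line of the sketch pair gives an unbiased estimator of the join size. -/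
open Classical in
/-- Each line of the sketch pair gives an unbiased estimator of the join size:
if the sketch cells are sums of per-entry contributions whose cross-sketch product
expectations are `1` for equal values (in the value's hash cell) and `0` otherwise, then
`E[∑_x M_A[j,x]·M_B[j,x]] = ∑_d f_A(d)·f_B(d) = |A ⋈ B|`. -/
theorem stmt_17 (D : Type) [Fintype D] (I : Type) [Fintype I]
    (nA nB : ℕ) (dataA : Fin nA → D) (dataB : Fin nB → D) (h : D → I)
    (Ω : Type) [Fintype Ω] (μ : Ω → ℝ) (hμ0 : ∀ ω, 0 ≤ μ ω) (hμ1 : ∑ ω, μ ω = 1)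
    (XA : Fin nA → I → Ω → ℝ) (XB : Fin nB → I → Ω → ℝ)
    (hcross : ∀ iA iB x, ∑ ω, μ ω * (XA iA x ω * XB iB x ω) =
      if dataA iA = dataB iB ∧ h (dataA iA) = x then 1 else 0) :
    ∑ ω, μ ω * (∑ x, (∑ iA, XA iA x ω) * (∑ iB, XB iB x ω)) =
      ∑ d : D, ((Finset.univ.filter (fun i : Fin nA => dataA i = d)).card : ℝ) *
        ((Finset.univ.filter (fun i : Fin nB => dataB i = d)).card : ℝ) := by
  classical
  have key : ∑ ω, μ ω * (∑ x, (∑ iA, XA iA x ω) * (∑ iB, XB iB x ω)) =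
      ∑ iA, ∑ iB, (if dataA iA = dataB iB then (1:ℝ) else 0) := by
    calc ∑ ω, μ ω * (∑ x, (∑ iA, XA iA x ω) * (∑ iB, XB iB x ω))
        = ∑ ω, ∑ x, ∑ iA, ∑ iB, μ ω * (XA iA x ω * XB iB x ω) := by
          simp only [Finset.mul_sum, Finset.sum_mul]
          refine Finset.sum_congr rfl fun ω _ => Finset.sum_congr rfl fun x _ => ?_
          rw [Finset.sum_comm]
      _ = ∑ x, ∑ iA, ∑ iB, ∑ ω, μ ω * (XA iA x ω * XB iB x ω) := by
          rw [Finset.sum_comm]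
          refine Finset.sum_congr rfl fun x _ => ?_
          rw [Finset.sum_comm]
          refine Finset.sum_congr rfl fun iA _ => ?_
          rw [Finset.sum_comm]
      _ = ∑ x, ∑ iA, ∑ iB, (if dataA iA = dataB iB ∧ h (dataA iA) = x then (1:ℝ) else 0) := by
          simp_rw [hcross]
      _ = ∑ iA, ∑ iB, ∑ x, (if dataA iA = dataB iB ∧ h (dataA iA) = x then (1:ℝ) else 0) := by
          rw [Finset.sum_comm]
          exact Finset.sum_congr rfl fun iA _ => Finset.sum_comm
      _ = ∑ iA, ∑ iB, (if dataA iA = dataB iB then (1:ℝ) else 0) := by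
          refine Finset.sum_congr rfl fun iA _ => Finset.sum_congr rfl fun iB _ => ?_
          simp [ite_and]
  rw [key]
  symm
  calc ∑ d : D, ((Finset.univ.filter (fun i : Fin nA => dataA i = d)).card : ℝ) *
        ((Finset.univ.filter (fun i : Fin nB => dataB i = d)).card : ℝ)
      = ∑ d : D, ∑ iA, ∑ iB, (if dataA iA = d then (1:ℝ) else 0) * (if dataB iB = d then (1:ℝ) else 0) := by
        refine Finset.sum_congr rfl fun d _ => ?_
        rw [Finset.card_filter, Finset.card_filter]
        push_cast
        rw [Finset.sum_mul_sum]
    _ = ∑ iA, ∑ iB, ∑ d : D, (if dataA iA = d then (1:ℝ) else 0) * (if dataB iB = d then (1:ℝ) else 0) := by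
        rw [Finset.sum_comm]
        exact Finset.sum_congr rfl fun iA _ => Finset.sum_comm
    _ = ∑ iA, ∑ iB, (if dataA iA = dataB iB then (1:ℝ) else 0) := by
        refine Finset.sum_congr rfl fun iA _ => Finset.sum_congr rfl fun iB _ => ?_
        simp [ite_and, mul_ite, eq_comm]
end

section
/- Let M be an LDPJoinSketch with k lines summarizing a multiset with frequency function f over domain D, such that for each line j and each value d, E[M[j, h_j(d)]] = f(d)·ξ_j(d) + (1/m)·Σ_{d' ≠ d, h_j(d')=h_j(d)} f(d')·ξ_j(d') where ξ_j is 2-wise independent uniform on {±1}. Then the estimator f̃(d) = (1/k)·Σ_{j=0}^{k-1} M[j, h_j(d)]·ξ_j(d) is unbiased: E[f̃(d)] = f(d). -/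
open Classical in
/-- Unbiased frequency estimation: if for each line `j`,
`E[M[j, h_j(d)]] = f(d)·ξ_j(d) + (1/m)·∑_{d' ≠ d, h_j(d')=h_j(d)} f(d')·ξ_j(d')`
where `ξ_j` is a 2-wise independent uniform sign function, then the estimator
`f̃(d) = (1/k)·∑_j M[j, h_j(d)]·ξ_j(d)` satisfies `E[f̃(d)] = f(d)`. -/
theorem stmt_18 (k m : ℕ) (hk : 0 < k) (D : Type) [Fintype D] (I : Type)
    (h : Fin k → D → I) (f : D → ℝ)
    (Ξ : Type) [Fintype Ξ] (ρ : Ξ → ℝ) (hρ0 : ∀ e, 0 ≤ ρ e) (hρ1 : ∑ e, ρ e = 1)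
    (ξ : Ξ → Fin k → D → ℝ) (hξval : ∀ e j d, ξ e j d = 1 ∨ ξ e j d = -1)
    (hξ2 : ∀ j (d d' : D), d ≠ d' → ∑ e, ρ e * (ξ e j d * ξ e j d') = 0)
    (Ω : Type) [Fintype Ω] (μ : Ω → ℝ) (hμ0 : ∀ ω, 0 ≤ μ ω) (hμ1 : ∑ ω, μ ω = 1)
    (M : Ξ → Fin k → I → Ω → ℝ) (d : D)
    (hM : ∀ e j, ∑ ω, μ ω * M e j (h j d) ω =
      f d * ξ e j d + ((1 : ℝ)/m) *
        ∑ d' ∈ Finset.univ.filter (fun d' : D => d' ≠ d ∧ h j d' = h j d),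
          f d' * ξ e j d') :
    ∑ e, ∑ ω, ρ e * μ ω * (((1 : ℝ)/k) * ∑ j, M e j (h j d) ω * ξ e j d) = f d := by
  have hsq : ∀ e j, ξ e j d * ξ e j d = 1 := by
    intro e j; rcases hξval e j d with h1 | h1 <;> rw [h1] <;> ring
  have key : ∀ j : Fin k,
      ∑ e, ρ e * ((∑ ω, μ ω * M e j (h j d) ω) * ξ e j d) = f d := by
    intro j
    set T := Finset.univ.filter (fun d' : D => d' ≠ d ∧ h j d' = h j d) with hT
    have step1 : ∑ e, ρ e * ((∑ ω, μ ω * M e j (h j d) ω) * ξ e j d)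
        = ∑ e, (f d * (ρ e * (ξ e j d * ξ e j d))
            + ((1:ℝ)/m) * ∑ d' ∈ T, f d' * (ρ e * (ξ e j d * ξ e j d'))) := by
      refine Finset.sum_congr rfl fun e _ => ?_
      rw [hM e j]
      have hS : ∑ d' ∈ T, f d' * (ρ e * (ξ e j d * ξ e j d'))
          = (ρ e * ξ e j d) * ∑ d' ∈ T, f d' * ξ e j d' := by
        rw [Finset.mul_sum]
        exact Finset.sum_congr rfl fun d' _ => by ring
      rw [hS]; ring
    rw [step1, Finset.sum_add_distrib]
    have h1 : ∑ e, f d * (ρ e * (ξ e j d * ξ e j d)) = f d := by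
      have : ∀ e : Ξ, f d * (ρ e * (ξ e j d * ξ e j d)) = f d * ρ e := by
        intro e; rw [hsq e j, mul_one]
      rw [Finset.sum_congr rfl fun e _ => this e, ← Finset.mul_sum, hρ1, mul_one]
    have h2 : ∑ e, ((1:ℝ)/m) * ∑ d' ∈ T, f d' * (ρ e * (ξ e j d * ξ e j d')) = 0 := by
      rw [← Finset.mul_sum, Finset.sum_comm]
      have hz : ∀ d' ∈ T, ∑ e, f d' * (ρ e * (ξ e j d * ξ e j d')) = 0 := by
        intro d' hd'
        have hne : d ≠ d' := fun hc => ((Finset.mem_filter.mp hd').2).1 hc.symm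
        rw [← Finset.mul_sum, hξ2 j d d' hne, mul_zero]
      rw [Finset.sum_eq_zero hz, mul_zero]
    rw [h1, h2, add_zero]
  calc ∑ e, ∑ ω, ρ e * μ ω * (((1 : ℝ)/k) * ∑ j, M e j (h j d) ω * ξ e j d)
      = ∑ e, ∑ j : Fin k, ∑ ω, ((1:ℝ)/k) * (ρ e * (μ ω * M e j (h j d) ω * ξ e j d)) := by
        refine Finset.sum_congr rfl fun e _ => ?_
        rw [Finset.sum_comm]
        refine Finset.sum_congr rfl fun ω _ => ?_
        rw [Finset.mul_sum, Finset.mul_sum]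
        exact Finset.sum_congr rfl fun j _ => by ring
    _ = ∑ j : Fin k, ∑ e, ∑ ω, ((1:ℝ)/k) * (ρ e * (μ ω * M e j (h j d) ω * ξ e j d)) := by
        rw [Finset.sum_comm]
    _ = ((1:ℝ)/k) * ∑ j : Fin k, ∑ e, ρ e * ((∑ ω, μ ω * M e j (h j d) ω) * ξ e j d) := by
        rw [Finset.mul_sum]
        refine Finset.sum_congr rfl fun j _ => ?_
        rw [Finset.mul_sum]
        refine Finset.sum_congr rfl fun e _ => ?_
        rw [Finset.sum_mul, Finset.mul_sum, Finset.mul_sum]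
    _ = ((1:ℝ)/k) * ∑ j : Fin k, f d := by
        rw [Finset.sum_congr rfl fun j _ => key j]
    _ = f d := by
        rw [Finset.sum_const, Finset.card_univ, Fintype.card_fin, nsmul_eq_mul]
        field_simp
end
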